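/- arXiv:math/0203056 — 3 statements merged into one kernel-verified Lean document; each statement's English description precedes it below -/
import Mathlib

section
/- Let $\beta > 1$ and let $\varepsilon = (\varepsilon_n)_{n\geq 1}$ be the greedy $\beta$-expansion of some $x \in [0,1)$. Then for every $n \geq 1$, the shifted sequence $(\varepsilon_n, \varepsilon_{n+1}, \dots)$ is lexicographically strictly less than the quasi-greedy expansion $(a_1, a_2, \dots)$ of $1$. -/
/-- The β-transformation `T(x) = βx mod 1`. -/
noncomputable def betaT (β : ℝ) (x : ℝ) : ℝ := Int.fract (β * x)

/-- The `n`-th greedy digit of `x` (0-indexed): `ε_{n+1}(x) = ⌊β Tⁿ x⌋`. -/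
noncomputable def greedyDigit (β : ℝ) (x : ℝ) (n : ℕ) : ℤ := ⌊β * (betaT β)^[n] x⌋

/-- The greedy expansion of `1` in base `β` (0-indexed): `a'_{n+1} = ⌊β Tⁿ 1⌋`. -/
noncomputable def greedyOne (β : ℝ) (n : ℕ) : ℤ := ⌊β * (betaT β)^[n] 1⌋

open Classical in
/-- The quasi-greedy expansion of `1` in base `β`: the greedy expansion of `1` if it is
infinite; if it is finite with last nonzero digit at (0-indexed) position `k`, the periodic
sequence `(a'_1, …, a'_k, a'_{k+1} - 1)^∞`. -/
noncomputable def quasiGreedyOne (β : ℝ) : ℕ → ℤ :=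
  if ∃ N, ∀ n ≥ N, greedyOne β n = 0 then
    fun n =>
      let k := sSup {j | greedyOne β j ≠ 0}
      if n % (k + 1) = k then greedyOne β k - 1 else greedyOne β (n % (k + 1))
  else greedyOne β

/-- Strict lexicographic order on one-sided sequences. -/
def LexLt (u v : ℕ → ℤ) : Prop := ∃ n, (∀ m < n, u m = v m) ∧ u n < v n

/-- The remainder sequence associated to a digit sequence `a`. -/
noncomputable def parryRho (β : ℝ) (a : ℕ → ℤ) : ℕ → ℝ
  | 0 => 1
  | n+1 => β * parryRho β a n - a n

lemma betaT_iter_mem (β x : ℝ) (hx : x ∈ Set.Ico (0:ℝ) 1) (n : ℕ) :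
    (betaT β)^[n] x ∈ Set.Ico (0:ℝ) 1 := by
  cases n with
  | zero => simpa using hx
  | succ n =>
    rw [Function.iterate_succ_apply']
    exact ⟨Int.fract_nonneg _, Int.fract_lt_one _⟩

lemma t_mem (β : ℝ) (n : ℕ) : (betaT β)^[n] 1 ∈ Set.Icc (0:ℝ) 1 := by
  cases n with
  | zero => simp
  | succ n =>
    rw [Function.iterate_succ_apply']
    exact ⟨Int.fract_nonneg _, le_of_lt (Int.fract_lt_one _)⟩

lemma main_lex (β : ℝ) (hβ : 1 < β) (a : ℕ → ℤ) (hρ : ∀ n, parryRho β a n ≤ 1)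
    (x : ℝ) (hx : x ∈ Set.Ico (0:ℝ) 1) : LexLt (greedyDigit β x) a := by
  classical
  have hβ0 : (0:ℝ) < β := lt_trans one_pos hβ
  have inv : ∀ n, (∀ m < n, greedyDigit β x m = a m) →
      (betaT β)^[n] x = β^n * (x - 1) + parryRho β a n := by
    intro n
    induction n with
    | zero => intro _; simp [parryRho]
    | succ n ih =>
      intro h
      have hn := ih (fun m hm => h m (hm.trans (Nat.lt_succ_self n)))
      have hd : (⌊β * (betaT β)^[n] x⌋ : ℝ) = (a n : ℝ) := by
        exact_mod_cast congrArg (fun z : ℤ => (z : ℝ)) (h n (Nat.lt_succ_self n))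
      rw [Function.iterate_succ_apply', betaT, Int.fract, hd, hn]
      show β * (β ^ n * (x - 1) + parryRho β a n) - (a n : ℝ)
          = β ^ (n+1) * (x - 1) + (β * parryRho β a n - (a n : ℝ))
      ring
  have key : ∀ n, (∀ m < n, greedyDigit β x m = a m) →
      (betaT β)^[n] x < parryRho β a n := by
    intro n h
    have h1 := inv n h
    have h2 : β ^ n * (x - 1) < 0 :=
      mul_neg_of_pos_of_neg (pow_pos hβ0 n) (by linarith [hx.2])
    linarith
  have hD : ∃ n, greedyDigit β x n ≠ a n := by
    by_contra h
    push_neg at h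
    obtain ⟨n, hn⟩ := pow_unbounded_of_one_lt ((1:ℝ)/(1-x)) hβ
    have h1 := inv n (fun m _ => h m)
    have h0 : 0 ≤ (betaT β)^[n] x := (betaT_iter_mem β x hx n).1
    have hρn := hρ n
    have hx1 : 0 < 1 - x := by linarith [hx.2]
    rw [div_lt_iff₀ hx1] at hn
    nlinarith
  let n := Nat.find hD
  have hne : greedyDigit β x n ≠ a n := Nat.find_spec hD
  have hagree : ∀ m < n, greedyDigit β x m = a m := by
    intro m hm
    by_contra hc
    exact Nat.find_min hD hm hc
  have hlt := key n hagree
  have h3 : β * parryRho β a n = (a n : ℝ) + parryRho β a (n+1) := by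
    show β * parryRho β a n = (a n : ℝ) + (β * parryRho β a n - (a n : ℝ))
    ring
  have h2 : β * (betaT β)^[n] x < (a n : ℝ) + 1 := by
    have hm := mul_lt_mul_of_pos_left hlt hβ0
    have := hρ (n+1)
    linarith
  have h4 : greedyDigit β x n < a n + 1 := by
    rw [greedyDigit, Int.floor_lt]
    push_cast
    linarith
  exact ⟨n, hagree, lt_of_le_of_ne (by omega) hne⟩

lemma rho_greedyOne (β : ℝ) (n : ℕ) :
    parryRho β (greedyOne β) n = (betaT β)^[n] 1 := by
  induction n with
  | zero => simp [parryRho]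
  | succ n ih =>
    rw [Function.iterate_succ_apply', betaT, Int.fract]
    show β * parryRho β (greedyOne β) n - ((greedyOne β n : ℤ) : ℝ)
        = β * (betaT β)^[n] 1 - (⌊β * (betaT β)^[n] 1⌋ : ℝ)
    rw [ih]; rfl

lemma aux_rho (β : ℝ) (k : ℕ)
    (hβtk : β * (betaT β)^[k] 1 = (greedyOne β k : ℝ)) (n : ℕ) :
    parryRho β (fun m => if m % (k+1) = k then greedyOne β k - 1
      else greedyOne β (m % (k+1))) n = (betaT β)^[n % (k+1)] 1 := by
  induction n with
  | zero => simp [parryRho]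
  | succ n ih =>
    have hr : n % (k+1) < k + 1 := Nat.mod_lt _ (Nat.succ_pos k)
    show β * parryRho β _ n
        - ((if n % (k+1) = k then greedyOne β k - 1 else greedyOne β (n % (k+1)) : ℤ) : ℝ)
        = (betaT β)^[(n+1) % (k+1)] 1
    rw [ih]
    by_cases hc : n % (k+1) = k
    · rw [if_pos hc, hc]
      have hmod : (n+1) % (k+1) = 0 := by
        have hdm := Nat.div_add_mod n (k+1)
        have he : n + 1 = (k+1) * (n/(k+1) + 1) := by
          rw [Nat.mul_add, Nat.mul_one]; omega
        rw [he, Nat.mul_mod_right]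
      rw [hmod]
      push_cast
      rw [hβtk]
      simp
    · rw [if_neg hc]
      have hrk : n % (k+1) < k := lt_of_le_of_ne (by omega) hc
      have hmod : (n+1) % (k+1) = n % (k+1) + 1 := by
        have hdm := Nat.div_add_mod n (k+1)
        have he : n + 1 = (k+1) * (n/(k+1)) + (n % (k+1) + 1) := by omega
        rw [he, Nat.mul_add_mod]
        exact Nat.mod_eq_of_lt (by omega)
      rw [hmod, Function.iterate_succ_apply', betaT, Int.fract]
      rfl

lemma rho_quasi_le_one (β : ℝ) (hβ : 1 < β) (n : ℕ) :
    parryRho β (quasiGreedyOne β) n ≤ 1 := by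
  classical
  rw [quasiGreedyOne]
  split_ifs with hfin
  · obtain ⟨N, hN⟩ := hfin
    have hS0 : 0 ∈ {j | greedyOne β j ≠ 0} := by
      have h1 : (1:ℤ) ≤ ⌊β * (betaT β)^[0] 1⌋ := by
        rw [Int.le_floor]; simp; linarith
      simp only [Set.mem_setOf_eq, greedyOne]
      omega
    have hbdd : BddAbove {j | greedyOne β j ≠ 0} := by
      refine ⟨N, fun j hj => ?_⟩
      by_contra h
      push_neg at h
      exact hj (hN j (le_of_lt h))
    set k := sSup {j | greedyOne β j ≠ 0} with hk
    have hkS : k ∈ {j | greedyOne β j ≠ 0} := Nat.sSup_mem ⟨0, hS0⟩ hbdd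
    have hk0 : ∀ j, k < j → greedyOne β j = 0 := by
      intro j hj
      by_contra h
      exact absurd (le_csSup hbdd h) (not_le.mpr hj)
    -- the greedy orbit dies at step k+1
    have hiter : ∀ m, (betaT β)^[k+1+m] 1 = β^m * (betaT β)^[k+1] 1 := by
      intro m
      induction m with
      | zero => simp
      | succ m ih =>
        have hz : greedyOne β (k+1+m) = 0 := hk0 _ (by omega)
        have hnn : 0 ≤ (betaT β)^[k+1+m] 1 := (t_mem β _).1
        have hlt : β * (betaT β)^[k+1+m] 1 < 1 := by
          have hfl : ⌊β * (betaT β)^[k+1+m] 1⌋ = 0 := hz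
          have h1 := Int.lt_floor_add_one (β * (betaT β)^[k+1+m] 1)
          rw [hfl] at h1
          push_cast at h1
          linarith
        have hstep : (betaT β)^[k+1+(m+1)] 1 = β * (betaT β)^[k+1+m] 1 := by
          rw [show k+1+(m+1) = (k+1+m)+1 by ring, Function.iterate_succ_apply', betaT,
            Int.fract_eq_self.mpr ⟨mul_nonneg (by linarith) hnn, hlt⟩]
        rw [hstep, ih, pow_succ]; ring
    have ht0 : (betaT β)^[k+1] 1 = 0 := by
      by_contra h
      have hpos : 0 < (betaT β)^[k+1] 1 := lt_of_le_of_ne (t_mem β _).1 (Ne.symm h)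
      obtain ⟨m, hm⟩ := pow_unbounded_of_one_lt (1 / (betaT β)^[k+1] 1) hβ
      rw [div_lt_iff₀ hpos] at hm
      have hle := (t_mem β (k+1+m)).2
      rw [hiter m] at hle
      linarith
    have hβtk : β * (betaT β)^[k] 1 = (greedyOne β k : ℝ) := by
      have h1 : (betaT β)^[k+1] 1 = Int.fract (β * (betaT β)^[k] 1) := by
        rw [Function.iterate_succ_apply']; rfl
      rw [ht0] at h1
      have h2 : β * (betaT β)^[k] 1 - (⌊β * (betaT β)^[k] 1⌋ : ℝ) = 0 := by
        rw [← Int.fract]; exact h1.symm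
      have : β * (betaT β)^[k] 1 = (⌊β * (betaT β)^[k] 1⌋ : ℝ) := by linarith
      exact this
    have heq : (fun m => (fun n =>
        let k' := sSup {j | greedyOne β j ≠ 0};
        if n % (k' + 1) = k' then greedyOne β k' - 1 else greedyOne β (n % (k' + 1))) m)
        = (fun m => if m % (k+1) = k then greedyOne β k - 1
            else greedyOne β (m % (k+1))) := rfl
    show parryRho β (fun n =>
        let k' := sSup {j | greedyOne β j ≠ 0};
        if n % (k' + 1) = k' then greedyOne β k' - 1 else greedyOne β (n % (k' + 1))) n ≤ 1
    rw [heq, aux_rho β k hβtk n]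
    exact (t_mem β _).2
  · rw [rho_greedyOne]
    exact (t_mem β _).2

lemma greedyDigit_shift (β x : ℝ) (n m : ℕ) :
    greedyDigit β ((betaT β)^[n] x) m = greedyDigit β x (n + m) := by
  unfold greedyDigit
  rw [← Function.iterate_add_apply, Nat.add_comm m n]

/-- Parry's theorem, direct direction: every shift of the greedy expansion of `x ∈ [0,1)`
is lexicographically strictly less than the quasi-greedy expansion of `1`. -/
theorem greedy_shift_lexLt_quasiGreedyOne (β : ℝ) (hβ : 1 < β) :
    ∀ x ∈ Set.Ico (0:ℝ) 1, ∀ n : ℕ,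
      LexLt (fun m => greedyDigit β x (n + m)) (quasiGreedyOne β) := by
  intro x hx n
  have hmem : (betaT β)^[n] x ∈ Set.Ico (0:ℝ) 1 := betaT_iter_mem β x hx n
  obtain ⟨m, h1, h2⟩ :=
    main_lex β hβ (quasiGreedyOne β) (rho_quasi_le_one β hβ) _ hmem
  refine ⟨m, fun j hj => ?_, ?_⟩
  · show greedyDigit β x (n + j) = quasiGreedyOne β j
    rw [← greedyDigit_shift]; exact h1 j hj
  · show greedyDigit β x (n + m) < quasiGreedyOne β m
    rw [← greedyDigit_shift]; exact h2
end

section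
/- Let $\beta > 1$. A sequence $\varepsilon \in \{0,1,\dots,\lfloor\beta\rfloor\}^{\mathbb{N}}$ satisfying $(\varepsilon_n, \varepsilon_{n+1},\dots) \prec (a_1,a_2,\dots)$ for all $n \geq 1$ (where $(a_n)$ is the quasi-greedy expansion of $1$) is the greedy $\beta$-expansion of the number $x = \sum_{n=1}^\infty \varepsilon_n \beta^{-n} \in [0,1)$. -/
namespace ParryAux

noncomputable def pval (β : ℝ) (c : ℕ → ℤ) : ℝ := ∑' m, (c m : ℝ) * (β ^ (m+1))⁻¹

variable {β : ℝ}

lemma inv_pow_lt_one (hβ : 1 < β) : β⁻¹ < 1 := inv_lt_one_of_one_lt₀ hβ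

lemma summable_geom (hβ : 1 < β) : Summable (fun m : ℕ => (β⁻¹) ^ m) :=
  summable_geometric_of_lt_one (by positivity) (inv_pow_lt_one hβ)

lemma summable_aux (hβ : 1 < β) (c : ℕ → ℤ) (h0 : ∀ m, 0 ≤ c m) (h1 : ∀ m, c m ≤ ⌊β⌋) :
    Summable (fun m => (c m : ℝ) * (β ^ (m+1))⁻¹) := by
  apply Summable.of_nonneg_of_le (fun m => ?_) (fun m => ?_)
    (((summable_geom hβ).mul_left ((⌊β⌋:ℝ))).mul_right β⁻¹)
  · have := h0 m
    positivity
  · have h := h1 m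
    have hb : (0:ℝ) < β := lt_trans one_pos hβ
    have : (β ^ (m+1))⁻¹ = (β⁻¹)^m * β⁻¹ := by
      rw [pow_succ, mul_inv, inv_pow]
    rw [this]
    have hnn : (0:ℝ) ≤ (β⁻¹)^m * β⁻¹ := by positivity
    calc (c m : ℝ) * ((β⁻¹)^m * β⁻¹) ≤ (⌊β⌋:ℝ) * ((β⁻¹)^m * β⁻¹) := by
          apply mul_le_mul_of_nonneg_right _ hnn
          exact_mod_cast h
      _ = (⌊β⌋:ℝ) * (β⁻¹)^m * β⁻¹ := by ring

lemma pval_nonneg (hβ : 1 < β) (c : ℕ → ℤ) (h0 : ∀ m, 0 ≤ c m) : 0 ≤ pval β c := by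
  apply tsum_nonneg
  intro m
  have hb : (0:ℝ) < β := lt_trans one_pos hβ
  have := h0 m
  positivity

lemma pval_le_M (hβ : 1 < β) (c : ℕ → ℤ) (h0 : ∀ m, 0 ≤ c m) (h1 : ∀ m, c m ≤ ⌊β⌋) :
    pval β c ≤ (⌊β⌋:ℝ) / (β - 1) := by
  have hb : (0:ℝ) < β := lt_trans one_pos hβ
  have hsum : ∑' m : ℕ, (⌊β⌋:ℝ) * (β⁻¹)^m * β⁻¹ = (⌊β⌋:ℝ) / (β - 1) := by
    rw [tsum_mul_right, tsum_mul_left, tsum_geometric_of_lt_one (by positivity) (inv_pow_lt_one hβ)]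
    have key : ((1:ℝ) - β⁻¹)⁻¹ * β⁻¹ = (β - 1)⁻¹ := by
      rw [← mul_inv]
      congr 1
      field_simp
    rw [mul_assoc, key, div_eq_mul_inv]
  rw [← hsum]
  apply Summable.tsum_le_tsum _ (summable_aux hβ c h0 h1)
    (((summable_geom hβ).mul_left ((⌊β⌋:ℝ))).mul_right β⁻¹)
  intro m
  have h := h1 m
  have : (β ^ (m+1))⁻¹ = (β⁻¹)^m * β⁻¹ := by rw [pow_succ, mul_inv, inv_pow]
  rw [this, ← mul_assoc]
  apply mul_le_mul_of_nonneg_right _ (by positivity)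
  apply mul_le_mul_of_nonneg_right _ (by positivity)
  exact_mod_cast h

lemma M_ge_one (hβ : 1 < β) : (1:ℝ) ≤ (⌊β⌋:ℝ) / (β - 1) := by
  rw [le_div_iff₀ (by linarith)]
  have : β - 1 < (⌊β⌋:ℝ) := by
    have := Int.lt_floor_add_one β
    linarith
  linarith

lemma pval_decomp (hβ : 1 < β) (c : ℕ → ℤ) (h0 : ∀ m, 0 ≤ c m) (h1 : ∀ m, c m ≤ ⌊β⌋) (n : ℕ) :
    pval β c = (∑ m ∈ Finset.range n, (c m : ℝ) * (β ^ (m+1))⁻¹)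
      + (β ^ n)⁻¹ * pval β (fun m => c (n + m)) := by
  have hb : (0:ℝ) < β := lt_trans one_pos hβ
  have hs := summable_aux hβ c h0 h1
  rw [pval, ← Summable.sum_add_tsum_nat_add n hs]
  congr 1
  rw [pval, ← tsum_mul_left]
  congr 1
  ext m
  rw [Nat.add_comm m n]
  have : β ^ (n + m + 1) = β ^ n * β ^ (m+1) := by ring
  rw [this, mul_inv]
  ring

/-! ### The greedy expansion of 1 -/

noncomputable def tOne (β : ℝ) (n : ℕ) : ℝ := (betaT β)^[n] 1

lemma tOne_zero : tOne β 0 = 1 := rfl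

lemma tOne_succ (n : ℕ) : tOne β (n+1) = Int.fract (β * tOne β n) := by
  rw [tOne, Function.iterate_succ_apply']; rfl

lemma tOne_nonneg (n : ℕ) : 0 ≤ tOne β n := by
  cases n with
  | zero => norm_num [tOne_zero]
  | succ m => rw [tOne_succ]; exact Int.fract_nonneg _

lemma tOne_le_one (n : ℕ) : tOne β n ≤ 1 := by
  cases n with
  | zero => norm_num [tOne_zero]
  | succ m => rw [tOne_succ]; exact le_of_lt (Int.fract_lt_one _)

lemma greedyOne_def (n : ℕ) : greedyOne β n = ⌊β * tOne β n⌋ := rfl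

lemma greedyOne_nonneg (hβ : 1 < β) (n : ℕ) : 0 ≤ greedyOne β n := by
  rw [greedyOne_def]
  apply Int.floor_nonneg.2
  have := tOne_nonneg (β := β) n
  nlinarith

lemma beta_tOne (n : ℕ) : β * tOne β n = greedyOne β n + tOne β (n+1) := by
  rw [tOne_succ, greedyOne_def, Int.fract]
  ring

lemma greedy_partial_sum (hβ : 1 < β) (n : ℕ) :
    ∑ m ∈ Finset.range n, (greedyOne β m : ℝ) * (β ^ (m+1))⁻¹ = 1 - (β ^ n)⁻¹ * tOne β n := by
  have hb : (0:ℝ) < β := lt_trans one_pos hβ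
  induction n with
  | zero => simp [tOne_zero]
  | succ n ih =>
    rw [Finset.sum_range_succ, ih]
    have hkey : (greedyOne β n : ℝ) = β * tOne β n - tOne β (n+1) := by
      have := beta_tOne (β := β) n; linarith
    rw [hkey]
    have h1 : (β ^ (n+1)) = β ^ n * β := by ring
    field_simp
    ring

lemma tOne_eq_zero_of_digits_zero (hβ : 1 < β) (N : ℕ) (h : ∀ n ≥ N, greedyOne β n = 0) :
    tOne β N = 0 := by
  have hb : (0:ℝ) < β := lt_trans one_pos hβ
  have hgrow : ∀ i : ℕ, tOne β (N + i) = β ^ i * tOne β N := by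
    intro i
    induction i with
    | zero => simp
    | succ i ih =>
      have hz : greedyOne β (N + i) = 0 := h _ (Nat.le_add_right _ _)
      have := beta_tOne (β := β) (N + i)
      rw [hz] at this
      have : tOne β (N + i + 1) = β * tOne β (N + i) := by push_cast at this; linarith
      rw [show N + (i+1) = N + i + 1 from rfl, this, ih]; ring
  by_contra hne
  have hpos : 0 < tOne β N := lt_of_le_of_ne (tOne_nonneg N) (Ne.symm hne)
  obtain ⟨i, hi⟩ := pow_unbounded_of_one_lt ((tOne β N)⁻¹) hβ
  have h1 : tOne β (N + i) ≤ 1 := tOne_le_one _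
  rw [hgrow i] at h1
  have h2 : 1 < β ^ i * tOne β N := by
    have := (inv_lt_iff_one_lt_mul₀ hpos).1 hi
    linarith [this]
  linarith

lemma tOne_pos_of_infinite (hβ : 1 < β) (h : ¬ ∃ N, ∀ n ≥ N, greedyOne β n = 0) (n : ℕ) :
    0 < tOne β n := by
  rcases lt_or_eq_of_le (tOne_nonneg (β := β) n) with h' | h'
  · exact h'
  · exfalso
    apply h
    refine ⟨n, fun m hm => ?_⟩
    have hz : ∀ i, tOne β (n + i) = 0 := by
      intro i
      induction i with
      | zero => simpa using h'.symm
      | succ i ih =>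
        rw [show n + (i+1) = (n+i) + 1 from rfl, tOne_succ, ih, mul_zero, Int.fract_zero]
    obtain ⟨i, rfl⟩ := Nat.exists_eq_add_of_le hm
    rw [greedyOne_def, hz i, mul_zero]
    norm_num

/-! ### The quasi-greedy expansion of 1 -/

lemma quasi_eq_of_fin (hfin : ∃ N, ∀ n ≥ N, greedyOne β n = 0) (n : ℕ) :
    quasiGreedyOne β n =
      (if n % (sSup {j | greedyOne β j ≠ 0} + 1) = sSup {j | greedyOne β j ≠ 0}
        then greedyOne β (sSup {j | greedyOne β j ≠ 0}) - 1
        else greedyOne β (n % (sSup {j | greedyOne β j ≠ 0} + 1))) := by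
  rw [quasiGreedyOne, if_pos hfin]

lemma quasi_eq_of_inf (hfin : ¬ ∃ N, ∀ n ≥ N, greedyOne β n = 0) :
    quasiGreedyOne β = greedyOne β := by
  rw [quasiGreedyOne, if_neg hfin]

lemma greedyOne_zero_pos (hβ : 1 < β) : 0 < greedyOne β 0 := by
  have : greedyOne β 0 = ⌊β * 1⌋ := rfl
  rw [this, mul_one]
  have h1 : (1:ℤ) ≤ ⌊β⌋ := Int.le_floor.2 (by exact_mod_cast hβ.le)
  omega

lemma sSup_mem_and_bound (hβ : 1 < β) (hfin : ∃ N, ∀ n ≥ N, greedyOne β n = 0) :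
    greedyOne β (sSup {j | greedyOne β j ≠ 0}) ≠ 0 ∧
    ∀ j, sSup {j | greedyOne β j ≠ 0} < j → greedyOne β j = 0 := by
  obtain ⟨N, hN⟩ := hfin
  have hne : {j | greedyOne β j ≠ 0}.Nonempty := ⟨0, (greedyOne_zero_pos hβ).ne'⟩
  have hbdd : BddAbove {j | greedyOne β j ≠ 0} := by
    refine ⟨N, fun j hj => ?_⟩
    by_contra h
    exact hj (hN j (le_of_not_ge h))
  refine ⟨Nat.sSup_mem hne hbdd, fun j hj => ?_⟩
  by_contra h
  exact absurd (le_csSup hbdd h) (not_le.2 hj)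

lemma quasi_partial_lt_one (hβ : 1 < β) (n : ℕ) :
    ∑ m ∈ Finset.range n, (quasiGreedyOne β m : ℝ) * (β ^ (m+1))⁻¹ < 1 := by
  have hb : (0:ℝ) < β := lt_trans one_pos hβ
  by_cases hfin : ∃ N, ∀ n ≥ N, greedyOne β n = 0
  · set k := sSup {j | greedyOne β j ≠ 0} with hk
    obtain ⟨hkne, hkbd⟩ := sSup_mem_and_bound hβ hfin
    have hak : 1 ≤ greedyOne β k := lt_of_le_of_ne (greedyOne_nonneg hβ k) (Ne.symm hkne)
    have ht : tOne β (k+1) = 0 :=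
      tOne_eq_zero_of_digits_zero hβ (k+1) (fun m hm => hkbd m (by omega))
    have hsum1 : ∑ m ∈ Finset.range (k+1), (greedyOne β m : ℝ) * (β ^ (m+1))⁻¹ = 1 := by
      rw [greedy_partial_sum hβ, ht, mul_zero, sub_zero]
    set q : ℝ := (β ^ (k+1))⁻¹ with hq
    have hq0 : 0 < q := by positivity
    have hq1 : q < 1 := by
      rw [hq, inv_lt_one_iff₀]
      right
      exact one_lt_pow₀ hβ (by omega)
    have hdig : ∀ m, (quasiGreedyOne β m : ℝ) =
        (if m % (k+1) = k then (greedyOne β k : ℝ) - 1 else (greedyOne β (m % (k+1)) : ℝ)) := by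
      intro m
      rw [quasi_eq_of_fin hfin]
      split <;> push_cast <;> ring
    have hblock : ∀ j : ℕ,
        ∑ m ∈ Finset.range (k+1), (quasiGreedyOne β (j*(k+1) + m) : ℝ) * (β ^ (j*(k+1)+m+1))⁻¹
          = q^j * (1 - q) := by
      intro j
      have hmod : ∀ m < k+1, (j*(k+1) + m) % (k+1) = m := by
        intro m hm
        rw [Nat.add_comm, Nat.add_mul_mod_self_right, Nat.mod_eq_of_lt hm]
      have hpow : ∀ m : ℕ, (β ^ (j*(k+1)+m+1))⁻¹ = q^j * (β ^ (m+1))⁻¹ := by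
        intro m
        rw [hq, inv_pow, ← pow_mul, ← mul_inv, ← pow_add]
        congr 1
        ring
      calc ∑ m ∈ Finset.range (k+1), (quasiGreedyOne β (j*(k+1) + m) : ℝ) * (β ^ (j*(k+1)+m+1))⁻¹
          = ∑ m ∈ Finset.range (k+1), q^j * ((if m = k then (greedyOne β k : ℝ) - 1
              else (greedyOne β m : ℝ)) * (β ^ (m+1))⁻¹) := by
            apply Finset.sum_congr rfl
            intro m hm
            rw [Finset.mem_range] at hm
            rw [hdig, hmod m hm, hpow]
            ring
        _ = q^j * ∑ m ∈ Finset.range (k+1), ((if m = k then (greedyOne β k : ℝ) - 1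
              else (greedyOne β m : ℝ)) * (β ^ (m+1))⁻¹) := by rw [Finset.mul_sum]
        _ = q^j * (1 - q) := by
            congr 1
            have hterm : ∀ m ∈ Finset.range (k+1), ((if m = k then (greedyOne β k : ℝ) - 1
                else (greedyOne β m : ℝ)) * (β ^ (m+1))⁻¹)
                = (greedyOne β m : ℝ) * (β ^ (m+1))⁻¹ - (if m = k then q else 0) := by
              intro m _
              split_ifs with h
              · subst h; rw [hq]; ring
              · ring
            rw [Finset.sum_congr rfl hterm, Finset.sum_sub_distrib, hsum1]
            have : ∑ m ∈ Finset.range (k+1), (if m = k then q else 0) = q := by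
              rw [Finset.sum_ite_eq' (Finset.range (k+1)) k (fun _ => q)]
              simp
            rw [this]
    have hA : ∀ j : ℕ, ∑ m ∈ Finset.range (j*(k+1)), (quasiGreedyOne β m : ℝ) * (β ^ (m+1))⁻¹
        = 1 - q^j := by
      intro j
      induction j with
      | zero => simp
      | succ j ih =>
        have hsplit : (j+1)*(k+1) = j*(k+1) + (k+1) := by ring
        rw [hsplit, Finset.sum_range_add, ih, hblock j]
        ring
    have hnn : ∀ m : ℕ, (0:ℝ) ≤ (quasiGreedyOne β m : ℝ) * (β ^ (m+1))⁻¹ := by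
      intro m
      have hnum : (0:ℝ) ≤ (quasiGreedyOne β m : ℝ) := by
        rw [hdig]
        split_ifs with h
        · have : (1:ℝ) ≤ (greedyOne β k : ℝ) := by exact_mod_cast hak
          linarith
        · exact_mod_cast greedyOne_nonneg hβ _
      positivity
    set j := n / (k+1) + 1 with hj
    have hle : n ≤ j * (k+1) := by
      have h2 := Nat.div_add_mod n (k+1)
      have h3 := Nat.mod_lt n (show 0 < k+1 by omega)
      calc n = (k+1)*(n/(k+1)) + n % (k+1) := h2.symm
        _ ≤ (k+1)*(n/(k+1)) + (k+1) := by omega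
        _ = j*(k+1) := by rw [hj]; ring
    calc ∑ m ∈ Finset.range n, (quasiGreedyOne β m : ℝ) * (β ^ (m+1))⁻¹
        ≤ ∑ m ∈ Finset.range (j*(k+1)), (quasiGreedyOne β m : ℝ) * (β ^ (m+1))⁻¹ := by
          apply Finset.sum_le_sum_of_subset_of_nonneg (Finset.range_subset_range.2 hle)
          intro m _ _
          exact hnn m
      _ = 1 - q^j := hA j
      _ < 1 := by
          have : 0 < q^j := by positivity
          linarith
  · rw [quasi_eq_of_inf hfin, greedy_partial_sum hβ]
    have h1 := tOne_pos_of_infinite hβ hfin n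
    have h2 : (0:ℝ) < (β ^ n)⁻¹ := by positivity
    nlinarith

/-! ### Admissible sequences -/

def Adm (β : ℝ) (c : ℕ → ℤ) : Prop :=
  (∀ m, 0 ≤ c m ∧ c m ≤ ⌊β⌋) ∧ ∀ n, LexLt (fun m => c (n+m)) (quasiGreedyOne β)

lemma Adm.shift {c : ℕ → ℤ} (h : Adm β c) (n : ℕ) : Adm β (fun m => c (n+m)) := by
  refine ⟨fun m => h.1 _, fun j => ?_⟩
  have := h.2 (n + j)
  simpa [Nat.add_assoc] using this

lemma adm_key (hβ : 1 < β) (c : ℕ → ℤ) (h : Adm β c) :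
    ∃ n : ℕ, pval β c ≤ (∑ m ∈ Finset.range (n+1), (quasiGreedyOne β m : ℝ) * (β^(m+1))⁻¹)
      + (β^(n+1))⁻¹ * (pval β (fun m => c ((n+1)+m)) - 1) := by
  have hb : (0:ℝ) < β := lt_trans one_pos hβ
  obtain ⟨n, hagree, hlt⟩ := h.2 0
  simp only [Nat.zero_add] at hagree hlt
  refine ⟨n, ?_⟩
  rw [pval_decomp hβ c (fun m => (h.1 m).1) (fun m => (h.1 m).2) (n+1)]
  have hsum : ∑ m ∈ Finset.range (n+1), (c m : ℝ) * (β ^ (m+1))⁻¹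
      ≤ (∑ m ∈ Finset.range (n+1), (quasiGreedyOne β m : ℝ) * (β^(m+1))⁻¹) - (β^(n+1))⁻¹ := by
    rw [Finset.sum_range_succ, Finset.sum_range_succ]
    have h1 : ∑ m ∈ Finset.range n, (c m : ℝ) * (β ^ (m+1))⁻¹
        = ∑ m ∈ Finset.range n, (quasiGreedyOne β m : ℝ) * (β^(m+1))⁻¹ := by
      apply Finset.sum_congr rfl
      intro m hm
      rw [Finset.mem_range] at hm
      rw [hagree m hm]
    rw [h1]
    have h2 : (c n : ℝ) ≤ (quasiGreedyOne β n : ℝ) - 1 := by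
      have : c n ≤ quasiGreedyOne β n - 1 := by omega
      calc (c n : ℝ) ≤ ((quasiGreedyOne β n - 1 : ℤ) : ℝ) := by exact_mod_cast this
        _ = (quasiGreedyOne β n : ℝ) - 1 := by push_cast; ring
    have h3 : (0:ℝ) < (β^(n+1))⁻¹ := by positivity
    nlinarith
  linarith [hsum]

lemma adm_pval_le (hβ : 1 < β) (k : ℕ) :
    ∀ c : ℕ → ℤ, Adm β c → pval β c ≤ 1 + (β⁻¹)^k * ((⌊β⌋:ℝ)/(β-1) - 1) := by
  have hb : (0:ℝ) < β := lt_trans one_pos hβ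
  induction k with
  | zero =>
    intro c h
    have := pval_le_M hβ c (fun m => (h.1 m).1) (fun m => (h.1 m).2)
    simpa using this
  | succ k ih =>
    intro c h
    obtain ⟨n, hn⟩ := adm_key hβ c h
    have hA := quasi_partial_lt_one hβ (n+1)
    have hσ := ih _ (h.shift (n+1))
    have hM := M_ge_one hβ
    have hD : (0:ℝ) ≤ (β⁻¹)^k * ((⌊β⌋:ℝ)/(β-1) - 1) := by
      have : (0:ℝ) ≤ (⌊β⌋:ℝ)/(β-1) - 1 := by linarith
      positivity
    have hr : (β^(n+1))⁻¹ ≤ β⁻¹ := by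
      apply inv_anti₀ hb
      calc β = β^1 := (pow_one β).symm
        _ ≤ β^(n+1) := pow_le_pow_right₀ hβ.le (by omega)
    have hr0 : (0:ℝ) < (β^(n+1))⁻¹ := by positivity
    have step : (β^(n+1))⁻¹ * (pval β (fun m => c ((n+1)+m)) - 1)
        ≤ β⁻¹ * ((β⁻¹)^k * ((⌊β⌋:ℝ)/(β-1) - 1)) := by
      have h1 : pval β (fun m => c ((n+1)+m)) - 1 ≤ (β⁻¹)^k * ((⌊β⌋:ℝ)/(β-1) - 1) := by
        linarith
      calc (β^(n+1))⁻¹ * (pval β (fun m => c ((n+1)+m)) - 1)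
          ≤ (β^(n+1))⁻¹ * ((β⁻¹)^k * ((⌊β⌋:ℝ)/(β-1) - 1)) :=
            mul_le_mul_of_nonneg_left h1 hr0.le
        _ ≤ β⁻¹ * ((β⁻¹)^k * ((⌊β⌋:ℝ)/(β-1) - 1)) :=
            mul_le_mul_of_nonneg_right hr hD
    have : pval β c ≤ 1 + β⁻¹ * ((β⁻¹)^k * ((⌊β⌋:ℝ)/(β-1) - 1)) := by linarith
    calc pval β c ≤ 1 + β⁻¹ * ((β⁻¹)^k * ((⌊β⌋:ℝ)/(β-1) - 1)) := this
      _ = 1 + (β⁻¹)^(k+1) * ((⌊β⌋:ℝ)/(β-1) - 1) := by ring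

lemma adm_pval_le_one (hβ : 1 < β) (c : ℕ → ℤ) (h : Adm β c) : pval β c ≤ 1 := by
  have h1 : Filter.Tendsto (fun k : ℕ => 1 + (β⁻¹)^k * ((⌊β⌋:ℝ)/(β-1) - 1))
      Filter.atTop (nhds (1 + 0 * ((⌊β⌋:ℝ)/(β-1) - 1))) := by
    apply Filter.Tendsto.add tendsto_const_nhds
    apply Filter.Tendsto.mul_const
    exact tendsto_pow_atTop_nhds_zero_of_lt_one (by positivity) (inv_pow_lt_one hβ)
  rw [show (1:ℝ) + 0 * ((⌊β⌋:ℝ)/(β-1) - 1) = 1 by ring] at h1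
  exact ge_of_tendsto' h1 (fun k => adm_pval_le hβ k c h)

lemma adm_pval_lt_one (hβ : 1 < β) (c : ℕ → ℤ) (h : Adm β c) : pval β c < 1 := by
  obtain ⟨n, hn⟩ := adm_key hβ c h
  have hA := quasi_partial_lt_one hβ (n+1)
  have hσ := adm_pval_le_one hβ _ (h.shift (n+1))
  have hr0 : (0:ℝ) < (β^(n+1))⁻¹ := by positivity
  nlinarith

end ParryAux

open ParryAux in
/-- Parry's theorem, converse direction: a sequence with digits in `{0,…,⌊β⌋}` all of whose
shifts are lexicographically less than the quasi-greedy expansion of `1` is the greedy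
expansion of `x = ∑ ε_n β^{-n} ∈ [0,1)`. -/
theorem lexLt_is_greedy_expansion (β : ℝ) (hβ : 1 < β) (ε : ℕ → ℤ)
    (hdig : ∀ n, 0 ≤ ε n ∧ ε n ≤ ⌊β⌋)
    (hlex : ∀ n : ℕ, LexLt (fun m => ε (n + m)) (quasiGreedyOne β)) :
    (∑' n : ℕ, (ε n : ℝ) * (β ^ (n + 1))⁻¹) ∈ Set.Ico (0:ℝ) 1 ∧
    ∀ n : ℕ, ε n = greedyDigit β (∑' n : ℕ, (ε n : ℝ) * (β ^ (n + 1))⁻¹) n := by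
  have hb : (0:ℝ) < β := lt_trans one_pos hβ
  set x : ℕ → ℝ := fun j => pval β (fun m => ε (j+m)) with hx
  have hadm : ∀ j, Adm β (fun m => ε (j+m)) := by
    intro j
    refine ⟨fun m => hdig _, fun n => ?_⟩
    have := hlex (j + n)
    simpa [Nat.add_assoc] using this
  have hx0 : ∀ j, 0 ≤ x j := fun j => pval_nonneg hβ _ (fun m => (hdig _).1)
  have hx1 : ∀ j, x j < 1 := fun j => adm_pval_lt_one hβ _ (hadm j)
  have hrec : ∀ j, β * x j = (ε j : ℝ) + x (j+1) := by
    intro j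
    have hd := pval_decomp hβ (fun m => ε (j+m)) (fun m => (hdig _).1) (fun m => (hdig _).2) 1
    have hshift : (fun m => ε (j + (1 + m))) = (fun m => ε ((j+1)+m)) := by
      funext m
      congr 1
      omega
    rw [hshift] at hd
    have : x j = (ε j : ℝ) * β⁻¹ + β⁻¹ * x (j+1) := by
      rw [hx]
      simpa using hd
    rw [this]
    field_simp
  have hxeq : x 0 = ∑' n : ℕ, (ε n : ℝ) * (β ^ (n + 1))⁻¹ := by
    have h0 : (fun m => ε (0+m)) = ε := by
      funext m
      rw [Nat.zero_add]
    show pval β (fun m => ε (0+m)) = _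
    rw [h0]
    rfl
  have hiter : ∀ j, (betaT β)^[j] (x 0) = x j := by
    intro j
    induction j with
    | zero => rfl
    | succ j ih =>
      rw [Function.iterate_succ_apply', ih, betaT, hrec j, Int.fract_intCast_add,
        Int.fract_eq_self.2 ⟨hx0 _, hx1 _⟩]
  constructor
  · rw [← hxeq]
    exact ⟨hx0 0, hx1 0⟩
  · intro n
    rw [← hxeq, greedyDigit, hiter n, hrec n, add_comm, Int.floor_add_intCast,
      Int.floor_eq_zero_iff.2 ⟨hx0 _, hx1 _⟩, zero_add]
end

section
/- Let $\beta > 1$ satisfy $\beta^2 = \beta + 1$ (the golden ratio). Then every element of $\mathbb{Z}[\beta] \cap [0,1)$ has a finite greedy $\beta$-expansion, i.e., $Fin(\beta) = \mathbb{Z}[\beta] \cap [0,1)$. -/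
/-- `Fin(β)`: numbers in `[0,1)` with finite (eventually zero) greedy β-expansion. -/
def FinBeta (β : ℝ) : Set ℝ :=
  {x | x ∈ Set.Ico (0:ℝ) 1 ∧ ∃ N, ∀ n ≥ N, greedyDigit β x n = 0}

section Aux
variable {β : ℝ} (hβ : 1 < β) (hquad : β ^ 2 = β + 1)

include hβ hquad in
lemma golden_lt_two : β < 2 := by nlinarith

lemma betaT_zero : betaT β 0 = 0 := by simp [betaT]

lemma iter_zero (t : ℕ) : (betaT β)^[t] (0:ℝ) = 0 :=
  Function.iterate_fixed betaT_zero t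

lemma orbit_mem {x : ℝ} (hx : x ∈ Set.Ico (0:ℝ) 1) (n : ℕ) :
    (betaT β)^[n] x ∈ Set.Ico (0:ℝ) 1 := by
  cases n with
  | zero => exact hx
  | succ n =>
    rw [Function.iterate_succ_apply']
    exact ⟨Int.fract_nonneg _, Int.fract_lt_one _⟩

/-- periodic point hit by zero is zero -/
lemma periodic_zero {y : ℝ} {q s : ℕ} (hq : 1 ≤ q)
    (hper : (betaT β)^[q] y = y) (hs : (betaT β)^[s] y = 0) : y = 0 := by
  have hmul : ∀ L, (betaT β)^[q * L] y = y := by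
    intro L
    induction L with
    | zero => simp
    | succ L ih =>
      have : q * (L + 1) = q * L + q := by ring
      rw [this, Function.iterate_add_apply, hper, ih]
  have h1 : (betaT β)^[q * s] y = y := hmul s
  have h2 : q * s = (q * s - s) + s := by
    have : s ≤ q * s := Nat.le_mul_of_pos_left s hq
    omega
  rw [h2, Function.iterate_add_apply, hs, iter_zero] at h1
  exact h1.symm

end Aux

section PartA
variable {β : ℝ}

/-- if all digits vanish from N on, the orbit is eventually linear -/
lemma tail_zero_iter (hβ : 1 < β) {x : ℝ} {N : ℕ}
    (h : ∀ n ≥ N, greedyDigit β x n = 0) (j : ℕ) :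
    (betaT β)^[N + j] x = β ^ j * (betaT β)^[N] x := by
  induction j with
  | zero => simp
  | succ j ih =>
    have hd : ⌊β * (betaT β)^[N + j] x⌋ = 0 := h (N + j) (Nat.le_add_right N j)
    have : (betaT β)^[N + (j + 1)] x = betaT β ((betaT β)^[N + j] x) := by
      rw [show N + (j + 1) = (N + j) + 1 by ring, Function.iterate_succ_apply']
    rw [this, betaT, Int.fract, hd, ih]
    push_cast
    ring

lemma tail_zero_eq_zero (hβ : 1 < β) {x : ℝ} (hx : x ∈ Set.Ico (0:ℝ) 1) {N : ℕ}
    (h : ∀ n ≥ N, greedyDigit β x n = 0) : (betaT β)^[N] x = 0 := by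
  set y := (betaT β)^[N] x with hy
  have hy0 : 0 ≤ y := (orbit_mem hx N).1
  rcases eq_or_lt_of_le hy0 with h0 | h0
  · exact h0.symm
  · exfalso
    obtain ⟨j, hj⟩ := pow_unbounded_of_one_lt (y⁻¹) hβ
    have h1 : (betaT β)^[N + j] x < 1 := (orbit_mem hx (N + j)).2
    rw [tail_zero_iter hβ h j] at h1
    have h2 := mul_lt_mul_of_pos_right hj h0
    rw [inv_mul_cancel₀ (ne_of_gt h0)] at h2
    linarith

/-- descent: membership in ℤ[β] pulls back along T -/
lemma mem_ring_of_iter (hβ : 1 < β) (hquad : β ^ 2 = β + 1) :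
    ∀ (N : ℕ) (x : ℝ), (betaT β)^[N] x = 0 → ∃ m n : ℤ, x = (m:ℝ) + n * β := by
  intro N
  induction N with
  | zero => intro x hx; exact ⟨0, 0, by simpa using hx⟩
  | succ N ih =>
    intro x hx
    rw [Function.iterate_succ_apply] at hx
    obtain ⟨m, n, hmn⟩ := ih (betaT β x) hx
    have hE : β * x = (⌊β * x⌋ : ℝ) + m + n * β := by
      have : betaT β x = β * x - ⌊β * x⌋ := by rw [betaT, Int.fract]
      rw [this] at hmn; linarith
    refine ⟨n - (⌊β * x⌋ + m), ⌊β * x⌋ + m, ?_⟩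
    have hβ0 : β ≠ 0 := by positivity
    apply mul_left_cancel₀ hβ0
    push_cast
    linear_combination hE - ((⌊β * x⌋ : ℝ) + (m : ℝ)) * hquad

end PartA

noncomputable def pseq (β x : ℝ) (p0 : ℤ × ℤ) : ℕ → ℤ × ℤ
  | 0 => p0
  | (k+1) => ((pseq β x p0 k).2 - greedyDigit β x k,
              (pseq β x p0 k).1 + (pseq β x p0 k).2)

section PartB
variable {β : ℝ}

lemma digit_nonneg {x : ℝ} (hβ : 1 < β) (hx : x ∈ Set.Ico (0:ℝ) 1) (k : ℕ) :
    0 ≤ greedyDigit β x k := by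
  have h := orbit_mem (β := β) hx k
  exact Int.floor_nonneg.mpr (mul_nonneg (by linarith) h.1)

lemma digit_le_one {x : ℝ} (hβ : 1 < β) (hquad : β ^ 2 = β + 1)
    (hx : x ∈ Set.Ico (0:ℝ) 1) (k : ℕ) : greedyDigit β x k ≤ 1 := by
  have h := orbit_mem (β := β) hx k
  have h2 : β < 2 := golden_lt_two hβ hquad
  have : β * (betaT β)^[k] x < 2 := by nlinarith [h.1, h.2]
  have := Int.floor_lt.mpr (by exact_mod_cast this : β * (betaT β)^[k] x < ((2:ℤ):ℝ))
  unfold greedyDigit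
  omega

/-- the orbit representation -/
lemma pseq_rep (hquad : β ^ 2 = β + 1) {x : ℝ} {p0 : ℤ × ℤ}
    (hrep : x = (p0.1 : ℝ) + (p0.2 : ℝ) * β) (k : ℕ) :
    (betaT β)^[k] x = ((pseq β x p0 k).1 : ℝ) + ((pseq β x p0 k).2 : ℝ) * β := by
  induction k with
  | zero => simpa [pseq] using hrep
  | succ k ih =>
    rw [Function.iterate_succ_apply']
    have hfr : betaT β ((betaT β)^[k] x)
        = β * (betaT β)^[k] x - (greedyDigit β x k : ℝ) := by
      rw [betaT, Int.fract]; rfl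
    rw [hfr, ih, pseq]
    push_cast
    linear_combination ((pseq β x p0 k).2 : ℝ) * hquad

/-- conjugate recurrence -/
lemma cseq_rec (hquad : β ^ 2 = β + 1) (x : ℝ) (p0 : ℤ × ℤ) (k : ℕ) :
    ((pseq β x p0 (k+1)).1 : ℝ) + ((pseq β x p0 (k+1)).2 : ℝ) * (1 - β)
      = (1 - β) * (((pseq β x p0 k).1 : ℝ) + ((pseq β x p0 k).2 : ℝ) * (1 - β))
        - (greedyDigit β x k : ℝ) := by
  rw [pseq]
  push_cast
  linear_combination -((pseq β x p0 k).2 : ℝ) * hquad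

/-- conjugate bound -/
lemma cseq_bound (hβ : 1 < β) (hquad : β ^ 2 = β + 1) {x : ℝ}
    (hx : x ∈ Set.Ico (0:ℝ) 1) (p0 : ℤ × ℤ) (k : ℕ) :
    |((pseq β x p0 k).1 : ℝ) + ((pseq β x p0 k).2 : ℝ) * (1 - β)|
      ≤ (β - 1) ^ k * |((p0.1 : ℝ) + (p0.2 : ℝ) * (1 - β))| + β ^ 2 := by
  have h2 : β < 2 := golden_lt_two hβ hquad
  induction k with
  | zero =>
    simp [pseq]
    nlinarith
  | succ k ih =>
    set c := ((pseq β x p0 k).1 : ℝ) + ((pseq β x p0 k).2 : ℝ) * (1 - β) with hc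
    have hrec := cseq_rec hquad x p0 k
    rw [hrec]
    have hd0 := digit_nonneg hβ hx k
    have hd1 := digit_le_one hβ hquad hx k
    have habs : |(1 - β) * c - (greedyDigit β x k : ℝ)|
        ≤ (β - 1) * |c| + 1 := by
      calc |(1 - β) * c - (greedyDigit β x k : ℝ)|
          ≤ |(1 - β) * c| + |(greedyDigit β x k : ℝ)| := abs_sub _ _
        _ ≤ (β - 1) * |c| + 1 := by
            rw [abs_mul, abs_of_nonpos (by linarith : (1:ℝ) - β ≤ 0)]
            have : |(greedyDigit β x k : ℝ)| ≤ 1 := by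
              rw [abs_le]; constructor <;> [exact_mod_cast (by omega : (-1:ℤ) ≤ _); exact_mod_cast hd1]
            linarith
    have hstep : (β - 1) * ((β - 1) ^ k * |((p0.1 : ℝ) + (p0.2 : ℝ) * (1 - β))| + β ^ 2) + 1
        = (β - 1) ^ (k+1) * |((p0.1 : ℝ) + (p0.2 : ℝ) * (1 - β))| + β ^ 2 := by
      have : (β - 1) * β ^ 2 + 1 = β ^ 2 := by nlinarith
      ring_nf
      nlinarith [this]
    calc |(1 - β) * c - (greedyDigit β x k : ℝ)| ≤ (β - 1) * |c| + 1 := habs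
      _ ≤ (β - 1) * ((β - 1) ^ k * |((p0.1 : ℝ) + (p0.2 : ℝ) * (1 - β))| + β ^ 2) + 1 := by
          have : (0:ℝ) ≤ β - 1 := by linarith
          nlinarith [ih]
      _ = _ := hstep

end PartB

section Main
variable {β : ℝ}

/-- pairs agree along the period -/
lemma pseq_periodic (hquad : β ^ 2 = β + 1) {x : ℝ} {p0 : ℤ × ℤ}
    (hrep : x = (p0.1 : ℝ) + (p0.2 : ℝ) * β) {j q : ℕ}
    (hq : pseq β x p0 (j + q) = pseq β x p0 j) :
    ∀ t, pseq β x p0 (j + q + t) = pseq β x p0 (j + t) := by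
  intro t
  induction t with
  | zero => simpa using hq
  | succ t ih =>
    have : j + q + (t + 1) = (j + q + t) + 1 := by ring
    rw [this, show j + (t+1) = (j + t) + 1 by ring, pseq, pseq, ih]
    have hd : greedyDigit β x (j + q + t) = greedyDigit β x (j + t) := by
      unfold greedyDigit
      have h1 := pseq_rep (β := β) hquad hrep (j + q + t)
      have h2 := pseq_rep (β := β) hquad hrep (j + t)
      rw [h1, h2, ih]
    rw [hd]

lemma pseq_loop (hquad : β ^ 2 = β + 1) {x : ℝ} {p0 : ℤ × ℤ}
    (hrep : x = (p0.1 : ℝ) + (p0.2 : ℝ) * β) {j q : ℕ}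
    (hq : pseq β x p0 (j + q) = pseq β x p0 j) :
    ∀ L, pseq β x p0 (j + q * L) = pseq β x p0 j := by
  intro L
  induction L with
  | zero => simp
  | succ L ih =>
    have : j + q * (L + 1) = j + q + (q * L) := by ring
    rw [this, pseq_periodic hquad hrep hq (q * L), ih]

/-- key step: the periodic point is zero -/
lemma periodic_point_zero (hβ : 1 < β) (hquad : β ^ 2 = β + 1) {x : ℝ}
    (hx : x ∈ Set.Ico (0:ℝ) 1) {p0 : ℤ × ℤ}
    (hrep : x = (p0.1 : ℝ) + (p0.2 : ℝ) * β) {j q : ℕ} (hq1 : 1 ≤ q)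
    (hq : pseq β x p0 (j + q) = pseq β x p0 j) :
    (betaT β)^[j] x = 0 := by
  have h2 : β < 2 := golden_lt_two hβ hquad
  obtain ⟨a, b, hab⟩ : ∃ a b : ℤ, pseq β x p0 j = (a, b) :=
    ⟨(pseq β x p0 j).1, (pseq β x p0 j).2, rfl⟩
  set y : ℝ := (betaT β)^[j] x with hy
  have hyrep : y = (a : ℝ) + (b : ℝ) * β := by
    have := pseq_rep (β := β) hquad hrep j
    rw [hab] at this
    exact this
  have hymem : y ∈ Set.Ico (0:ℝ) 1 := orbit_mem (β := β) hx j
  -- conjugate bound on the cycle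
  have hcb : |(a : ℝ) + (b : ℝ) * (1 - β)| ≤ β ^ 2 := by
    set c : ℝ := (a : ℝ) + (b : ℝ) * (1 - β) with hc
    by_contra hcon
    push_neg at hcon
    set C0 : ℝ := |((p0.1 : ℝ) + (p0.2 : ℝ) * (1 - β))| with hC0
    have hC0nn : 0 ≤ C0 := abs_nonneg _
    have hδ : (0:ℝ) < (|c| - β ^ 2) / (C0 + 1) :=
      div_pos (by linarith) (by linarith)
    obtain ⟨t, ht⟩ := exists_pow_lt_of_lt_one hδ (by linarith : β - 1 < 1)
    have hbound := cseq_bound hβ hquad hx p0 (j + q * t)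
    rw [pseq_loop hquad hrep hq t, hab] at hbound
    have hble : (β - 1) ^ (j + q * t) ≤ (β - 1) ^ t := by
      apply pow_le_pow_of_le_one (by linarith) (by linarith)
      calc t = 1 * t := (one_mul t).symm
        _ ≤ q * t := Nat.mul_le_mul_right t hq1
        _ ≤ j + q * t := Nat.le_add_left _ _
    have h0 : (0:ℝ) ≤ (β - 1) ^ t := pow_nonneg (by linarith) t
    have hfin : (β - 1) ^ t * C0 < |c| - β ^ 2 := by
      calc (β - 1) ^ t * C0 ≤ (β - 1) ^ t * (C0 + 1) := by nlinarith
        _ < (|c| - β ^ 2) / (C0 + 1) * (C0 + 1) :=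
            mul_lt_mul_of_pos_right ht (by linarith)
        _ = |c| - β ^ 2 := by field_simp
    have hmul := mul_le_mul_of_nonneg_right hble hC0nn
    simp only [← hc] at hbound
    linarith
  -- the second coordinate is small
  have hbcase : b = -1 ∨ b = 0 ∨ b = 1 := by
    have h5 : (2 * β - 1) ^ 2 = 5 := by nlinarith
    have habs : |(b : ℝ)| * (2 * β - 1) < 1 + β ^ 2 := by
      have hyc : (b : ℝ) * (2 * β - 1) = y - ((a : ℝ) + (b : ℝ) * (1 - β)) := by
        rw [hyrep]; ring
      have h3 : |(b : ℝ) * (2 * β - 1)| ≤ |y| + |(a : ℝ) + (b : ℝ) * (1 - β)| := by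
        rw [hyc]; exact abs_sub _ _
      rw [abs_mul, abs_of_pos (by linarith : (0:ℝ) < 2 * β - 1)] at h3
      have hyabs : |y| < 1 := abs_lt.mpr ⟨by linarith [hymem.1], hymem.2⟩
      linarith
    have hLnn : (0:ℝ) ≤ |(b:ℝ)| * (2 * β - 1) :=
      mul_nonneg (abs_nonneg _) (by linarith)
    have hsq' := mul_lt_mul'' habs habs hLnn hLnn
    have hsq : (b : ℝ) ^ 2 * 5 < (1 + β ^ 2) ^ 2 := by
      calc (b : ℝ) ^ 2 * 5 = (|(b:ℝ)| * (2 * β - 1)) * (|(b:ℝ)| * (2 * β - 1)) := by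
            rw [show (|(b:ℝ)| * (2 * β - 1)) * (|(b:ℝ)| * (2 * β - 1))
                = |(b:ℝ)| ^ 2 * (2 * β - 1) ^ 2 from by ring, sq_abs, h5]
        _ < (1 + β ^ 2) * (1 + β ^ 2) := hsq'
        _ = (1 + β ^ 2) ^ 2 := by ring
    have hkey : (1 + β ^ 2) ^ 2 = 5 * β ^ 2 := by nlinarith
    have hblt : (b : ℝ) ^ 2 < 4 := by nlinarith
    have hb4 : (b:ℤ) ^ 2 < 4 := by exact_mod_cast hblt
    have hl : -2 < b := by nlinarith [sq_nonneg (b + 2)]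
    have hr : b < 2 := by nlinarith [sq_nonneg (b - 2)]
    omega
  -- periodicity of y
  have hyper : (betaT β)^[q] y = y := by
    have e1 : (betaT β)^[q] y = (betaT β)^[q + j] x := by
      rw [hy, ← Function.iterate_add_apply]
    have e2 := pseq_rep (β := β) hquad hrep (q + j)
    have e3 : pseq β x p0 (q + j) = (a, b) := by
      rw [show q + j = j + q from by ring, hq, hab]
    rw [e1, e2, e3, ← hyrep]
  clear hq hab hrep
  rcases hbcase with hb1 | hb1 | hb1
  · -- b = -1 : y = 2 - β
    exfalso
    subst hb1
    have hy0 : y = (a : ℝ) - β := by rw [hyrep]; push_cast; ring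
    have ha2 : a = 2 := by
      have h1 : (1:ℝ) < (a:ℝ) := by
        have := hymem.1; rw [hy0] at this; linarith
      have h3 : (a:ℝ) < 3 := by
        have := hymem.2; rw [hy0] at this; linarith
      have h1' : (1:ℤ) < a := by exact_mod_cast h1
      have h3' : a < 3 := by exact_mod_cast h3
      omega
    subst ha2
    have hyval : y = 2 - β := by rw [hy0]; norm_num
    have hT1 : betaT β y = β - 1 := by
      rw [betaT, hyval]
      have : β * (2 - β) = β - 1 := by nlinarith
      rw [this]
      exact Int.fract_eq_self.mpr ⟨by linarith, by linarith⟩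
    have hT2 : (betaT β)^[2] y = 0 := by
      rw [show (2:ℕ) = 1 + 1 from rfl, Function.iterate_add_apply]
      simp only [Function.iterate_one]
      rw [hT1, betaT]
      have : β * (β - 1) = 1 := by nlinarith
      rw [this, Int.fract_one]
    have := periodic_zero (β := β) hq1 hyper hT2
    rw [hyval] at this
    linarith
  · -- b = 0 : y = a = 0
    subst hb1
    have hy0 : y = (a : ℝ) := by rw [hyrep]; push_cast; ring
    have h0 : (0:ℤ) ≤ a := by exact_mod_cast hy0 ▸ hymem.1
    have h1 : a < 1 := by exact_mod_cast hy0 ▸ hymem.2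
    have ha0 : a = 0 := by omega
    rw [hy0, ha0]; norm_num
  · -- b = 1 : y = β - 1
    exfalso
    subst hb1
    have hy0 : y = (a : ℝ) + β := by rw [hyrep]; push_cast; ring
    have ha1 : a = -1 := by
      have h1 : (a:ℝ) < 1 - β := by
        have := hymem.2; rw [hy0] at this; linarith
      have h3 : -β ≤ (a:ℝ) := by
        have := hymem.1; rw [hy0] at this; linarith
      have h1' : (a:ℝ) < 0 := by linarith
      have h3' : (-2:ℝ) < (a:ℝ) := by linarith
      have hA : (a:ℤ) < 0 := by exact_mod_cast h1'
      have hB : (-2:ℤ) < a := by exact_mod_cast h3'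
      omega
    subst ha1
    have hyval : y = β - 1 := by rw [hy0]; push_cast; ring
    have hT1 : (betaT β)^[1] y = 0 := by
      simp only [Function.iterate_one]
      rw [betaT, hyval]
      have : β * (β - 1) = 1 := by nlinarith
      rw [this, Int.fract_one]
    have := periodic_zero (β := β) hq1 hyper hT1
    rw [hyval] at this
    linarith

end Main

section Assemble
variable {β : ℝ}

lemma exists_repeat (hβ : 1 < β) (hquad : β ^ 2 = β + 1) {x : ℝ}
    (hx : x ∈ Set.Ico (0:ℝ) 1) (p0 : ℤ × ℤ)
    (hrep : x = (p0.1 : ℝ) + (p0.2 : ℝ) * β) :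
    ∃ j q : ℕ, 1 ≤ q ∧ pseq β x p0 (j + q) = pseq β x p0 j := by
  have h2 : β < 2 := golden_lt_two hβ hquad
  set C0 : ℝ := |((p0.1 : ℝ) + (p0.2 : ℝ) * (1 - β))| with hC0
  set C : ℝ := C0 + β ^ 2 with hC
  have hCnn : 0 ≤ C := by positivity
  set R : ℝ := (1 + C) / (2 * β - 1) with hR
  have hRnn : 0 ≤ R := div_nonneg (by linarith) (by linarith)
  set S : ℝ := 1 + 2 * R with hS
  have hcbd : ∀ k, |((pseq β x p0 k).1 : ℝ) + ((pseq β x p0 k).2 : ℝ) * (1 - β)| ≤ C := by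
    intro k
    have h1 := cseq_bound hβ hquad hx p0 k
    have hle : (β - 1) ^ k ≤ 1 := pow_le_one₀ (by linarith) (by linarith)
    have h0 : (0:ℝ) ≤ C0 := abs_nonneg _
    nlinarith
  have hbbd : ∀ k, |((pseq β x p0 k).2 : ℝ)| ≤ R := by
    intro k
    have hyk := orbit_mem (β := β) hx k
    have hrepk := pseq_rep (β := β) hquad hrep k
    have hid : ((pseq β x p0 k).2 : ℝ) * (2 * β - 1)
        = (betaT β)^[k] x - (((pseq β x p0 k).1 : ℝ) + ((pseq β x p0 k).2 : ℝ) * (1 - β)) := by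
      rw [hrepk]; ring
    have h3 : |((pseq β x p0 k).2 : ℝ)| * (2 * β - 1) ≤ 1 + C := by
      have := abs_sub ((betaT β)^[k] x) (((pseq β x p0 k).1 : ℝ) + ((pseq β x p0 k).2 : ℝ) * (1 - β))
      rw [← hid, abs_mul, abs_of_pos (by linarith : (0:ℝ) < 2 * β - 1)] at this
      have hy1 : |(betaT β)^[k] x| < 1 := abs_lt.mpr ⟨by linarith [hyk.1], hyk.2⟩
      have := hcbd k
      linarith
    rw [hR, le_div_iff₀ (by linarith : (0:ℝ) < 2 * β - 1)]
    exact h3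
  have habd : ∀ k, |((pseq β x p0 k).1 : ℝ)| ≤ S := by
    intro k
    have hyk := orbit_mem (β := β) hx k
    have hrepk := pseq_rep (β := β) hquad hrep k
    have hid : ((pseq β x p0 k).1 : ℝ) = (betaT β)^[k] x - ((pseq β x p0 k).2 : ℝ) * β := by
      rw [hrepk]; ring
    have h3 := abs_sub ((betaT β)^[k] x) (((pseq β x p0 k).2 : ℝ) * β)
    rw [← hid, abs_mul, abs_of_pos (by linarith : (0:ℝ) < β)] at h3
    have hy1 : |(betaT β)^[k] x| < 1 := abs_lt.mpr ⟨by linarith [hyk.1], hyk.2⟩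
    have hb := hbbd k
    have : |((pseq β x p0 k).2 : ℝ)| * β ≤ R * 2 := by nlinarith [abs_nonneg ((pseq β x p0 k).2 : ℝ)]
    rw [hS]; linarith
  -- integer bounds
  set D : ℤ := ⌈S⌉ with hD
  have hmem : ∀ k : ℕ, pseq β x p0 k ∈ (Set.Icc (-D) D ×ˢ Set.Icc (-D) D : Set (ℤ × ℤ)) := by
    intro k
    have hRS : R ≤ S := by rw [hS]; linarith
    have key : ∀ z : ℤ, |(z:ℝ)| ≤ S → z ∈ Set.Icc (-D) D := by
      intro z hz
      rw [abs_le] at hz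
      constructor
      · have : -(D:ℝ) ≤ (z:ℝ) := by
          have := Int.le_ceil S
          linarith [hz.1]
        exact_mod_cast this
      · have : (z:ℝ) ≤ (D:ℝ) := le_trans hz.2 (Int.le_ceil S)
        exact_mod_cast this
    exact ⟨key _ (habd k), key _ (le_trans (hbbd k) hRS)⟩
  have hfin : (Set.Icc (-D) D ×ˢ Set.Icc (-D) D : Set (ℤ × ℤ)).Finite :=
    (Set.finite_Icc _ _).prod (Set.finite_Icc _ _)
  obtain ⟨k, -, k', -, hne, heq⟩ :=
    Set.infinite_univ.exists_ne_map_eq_of_mapsTo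
      (f := fun k : ℕ => pseq β x p0 k) (fun k _ => hmem k) hfin
  rcases hne.lt_or_gt with hlt | hlt
  · exact ⟨k, k' - k, by omega, by rw [show k + (k' - k) = k' from by omega]; exact heq.symm⟩
  · exact ⟨k', k - k', by omega, by rw [show k' + (k - k') = k from by omega]; exact heq⟩

lemma partB (hβ : 1 < β) (hquad : β ^ 2 = β + 1) {x : ℝ}
    (hx : x ∈ Set.Ico (0:ℝ) 1) (m n : ℤ)
    (hrep : x = (m : ℝ) + (n : ℝ) * β) :
    ∃ N, ∀ k ≥ N, greedyDigit β x k = 0 := by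
  have hrep' : x = (((m, n) : ℤ × ℤ).1 : ℝ) + (((m, n) : ℤ × ℤ).2 : ℝ) * β := hrep
  obtain ⟨j, q, hq1, hq⟩ := exists_repeat hβ hquad hx (m, n) hrep'
  have hz : (betaT β)^[j] x = 0 := periodic_point_zero hβ hquad hx hrep' hq1 hq
  refine ⟨j, fun k hk => ?_⟩
  have : (betaT β)^[k] x = 0 := by
    rw [show k = (k - j) + j from by omega, Function.iterate_add_apply, hz, iter_zero]
  unfold greedyDigit
  rw [this, mul_zero]
  simp

end Assemble

/-- Finiteness property (F) for the golden ratio: `Fin(β) = ℤ[β] ∩ [0,1)` when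
`β² = β + 1`, `β > 1`. -/
theorem goldenRatio_finiteness_property (β : ℝ) (hβ : 1 < β) (hquad : β ^ 2 = β + 1) :
    FinBeta β = {x : ℝ | x ∈ Set.Ico (0:ℝ) 1 ∧ ∃ m n : ℤ, x = (m : ℝ) + (n : ℝ) * β} := by
  ext x
  constructor
  · rintro ⟨hx, N, hdig⟩
    exact ⟨hx, mem_ring_of_iter hβ hquad N x (tail_zero_eq_zero hβ hx hdig)⟩
  · rintro ⟨hx, m, n, hrep⟩
    exact ⟨hx, partB hβ hquad hx m n hrep⟩
end
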